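/- (Isosceles projective triangle) Suppose U, V, W are nonzero vectors with a_U, a_V, a_W all nonzero, with all three quantities a_U·a_V − b_{UV}², a_U·a_W − b_{UW}², a_V·a_W − b_{VW}² nonzero, whose projective triangle has projective quadrances q_u = q_v = q ≠ 0 and q_w ≠ 0 and projective spreads S_u = S_v = S and S_w, and suppose 1 − S·q ≠ 0. Then q_w = 4q(1 − S)(1 − q)/(1 − S·q)² and S_w = 4S(1 − S)(1 − q)/(1 − S·q)². -/

import Mathlib

/-- The projective quadrance between the projective points `[U]` and `[V]`. -/
def projQuadrance {F : Type*} [Field F] {M : Type*} [AddCommGroup M] [Module F M]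
    (B : LinearMap.BilinForm F M) (U V : M) : F :=
  1 - (B U V) ^ 2 / (B U U * B V V)

/-- The projective spread between the projective lines `WU` and `WV`
(the spread at the vertex `[W]`). -/
def projSpread {F : Type*} [Field F] {M : Type*} [AddCommGroup M] [Module F M]
    (B : LinearMap.BilinForm F M) (W U V : M) : F :=
  1 - (B W W * B U V - B U W * B V W) ^ 2 /
      ((B U U * B W W - (B U W) ^ 2) * (B V V * B W W - (B V W) ^ 2))

/-!
Writing `Δ` for the Gram determinant of `U, V, W`, every quadrance and spread is a rational
function of `Δ` and the entries of the Gram matrix. This yields the projective cross law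
`(q_v q_w S_u - q_u - q_v - q_w + 2)² = 4 (1 - q_u)(1 - q_v)(1 - q_w)`, where the left side is
`(2 b_UV b_UW b_VW / (a_U a_V a_W))²`, and the spread law `S_w q_u = S_u q_w`. For `q_u = q_v = q`
the cross law is a quadratic in `q_w` with roots `0` and `4q(1 - S)(1 - q)/(1 - Sq)²`, and the
spread law then gives `S_w = S q_w / q`.
-/

section

variable {F : Type*} [Field F] {M : Type*} [AddCommGroup M] [Module F M]
  (B : LinearMap.BilinForm F M)

def gramDet (U V W : M) : F :=
  (Matrix.of fun i j => B (![U, V, W] i) (![U, V, W] j)).det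

variable {B}

lemma gramDet_eq (hB : ∀ x y, B x y = B y x) (U V W : M) :
    gramDet B U V W = B U U * B V V * B W W + 2 * B U V * B U W * B V W
      - B U U * B V W ^ 2 - B V V * B U W ^ 2 - B W W * B U V ^ 2 := by
  simp only [gramDet, Matrix.det_fin_three, Matrix.of_apply, Matrix.cons_val_zero,
    Matrix.cons_val_one, Matrix.cons_val_two, Matrix.head_cons, Matrix.tail_cons,
    hB V U, hB W U, hB W V]
  ring

lemma gramDet_rotate (hB : ∀ x y, B x y = B y x) (U V W : M) :
    gramDet B V W U = gramDet B U V W := by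
  rw [gramDet_eq hB, gramDet_eq hB, hB W U, hB V U]
  ring

lemma one_sub_projQuadrance (U V : M) :
    1 - projQuadrance B U V = B U V ^ 2 / (B U U * B V V) :=
  sub_sub_cancel _ _

lemma projQuadrance_eq_div {U V : M} (hU : B U U ≠ 0) (hV : B V V ≠ 0) :
    projQuadrance B U V = (B U U * B V V - B U V ^ 2) / (B U U * B V V) := by
  rw [projQuadrance, sub_div, div_self (mul_ne_zero hU hV)]

lemma projSpread_eq_div (hB : ∀ x y, B x y = B y x) {U V W : M}
    (hUW : B U U * B W W - B U W ^ 2 ≠ 0) (hVW : B V V * B W W - B V W ^ 2 ≠ 0) :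
    projSpread B W U V = B W W * gramDet B U V W /
      ((B U U * B W W - B U W ^ 2) * (B V V * B W W - B V W ^ 2)) := by
  rw [projSpread, gramDet_eq hB, eq_div_iff (mul_ne_zero hUW hVW), sub_mul,
    div_mul_cancel₀ _ (mul_ne_zero hUW hVW)]
  ring

lemma projSpread_mul_projQuadrance_eq (hB : ∀ x y, B x y = B y x) {U V W : M}
    (hU : B U U ≠ 0) (hV : B V V ≠ 0) (hW : B W W ≠ 0)
    (hUV : B U U * B V V - B U V ^ 2 ≠ 0) (hUW : B U U * B W W - B U W ^ 2 ≠ 0)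
    (hVW : B V V * B W W - B V W ^ 2 ≠ 0) :
    projSpread B W U V * projQuadrance B V W = projSpread B U V W * projQuadrance B U V := by
  have hVU : B V V * B U U - B V U ^ 2 ≠ 0 := by rwa [mul_comm, hB V U]
  have hWU : B W W * B U U - B W U ^ 2 ≠ 0 := by rwa [mul_comm, hB W U]
  rw [projSpread_eq_div hB hUW hVW, projSpread_eq_div hB hVU hWU, gramDet_rotate hB U V W,
    projQuadrance_eq_div hV hW, projQuadrance_eq_div hU hV, div_mul_div_comm, div_mul_div_comm,
    div_eq_div_iff (mul_ne_zero (mul_ne_zero hUW hVW) (mul_ne_zero hV hW))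
      (mul_ne_zero (mul_ne_zero hVU hWU) (mul_ne_zero hU hV)), hB V U, hB W U]
  ring

lemma projSpread_cross_law (hB : ∀ x y, B x y = B y x) {U V W : M}
    (hU : B U U ≠ 0) (hV : B V V ≠ 0) (hW : B W W ≠ 0)
    (hUV : B U U * B V V - B U V ^ 2 ≠ 0) (hUW : B U U * B W W - B U W ^ 2 ≠ 0) :
    (projQuadrance B U W * projQuadrance B U V * projSpread B U V W
        - projQuadrance B V W - projQuadrance B U W - projQuadrance B U V + 2) ^ 2 =
      4 * (1 - projQuadrance B V W) * (1 - projQuadrance B U W) *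
        (1 - projQuadrance B U V) := by
  have hVU : B V V * B U U - B V U ^ 2 ≠ 0 := by rwa [mul_comm, hB V U]
  have hWU : B W W * B U U - B W U ^ 2 ≠ 0 := by rwa [mul_comm, hB W U]
  have hinner : projQuadrance B U W * projQuadrance B U V * projSpread B U V W
      - projQuadrance B V W - projQuadrance B U W - projQuadrance B U V + 2 =
      2 * B U V * B U W * B V W / (B U U * B V V * B W W) := by
    rw [projSpread_eq_div hB hVU hWU, gramDet_rotate hB U V W, gramDet_eq hB,
      projQuadrance_eq_div hU hW, projQuadrance_eq_div hU hV, projQuadrance_eq_div hV hW,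
      hB V U, hB W U]
    field_simp
    ring
  rw [hinner, one_sub_projQuadrance, one_sub_projQuadrance, one_sub_projQuadrance]
  field_simp
  ring

end

lemma eq_of_isosceles_cross_law {F : Type*} [Field F] {q r S : F}
    (hcross : (q * r * S - 2 * q - r + 2) ^ 2 = 4 * (1 - q) ^ 2 * (1 - r))
    (hr : r ≠ 0) (hSq : 1 - S * q ≠ 0) :
    r = 4 * q * (1 - S) * (1 - q) / (1 - S * q) ^ 2 := by
  have hfactor : r * ((1 - S * q) ^ 2 * r - 4 * q * (1 - S) * (1 - q)) = 0 := by
    linear_combination hcross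
  rw [eq_div_iff (pow_ne_zero 2 hSq)]
  linear_combination (mul_eq_zero.mp hfactor).resolve_left hr

theorem isosceles_projective_triangle_general
    {F : Type*} [Field F]
    {M : Type*} [AddCommGroup M] [Module F M]
    (B : LinearMap.BilinForm F M) (hsym : ∀ x y : M, B x y = B y x)
    (U V W : M)
    (haU : B U U ≠ 0) (haV : B V V ≠ 0) (haW : B W W ≠ 0)
    (hdUV : B U U * B V V - (B U V) ^ 2 ≠ 0)
    (hdUW : B U U * B W W - (B U W) ^ 2 ≠ 0)
    (hdVW : B V V * B W W - (B V W) ^ 2 ≠ 0)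
    (q S : F)
    (hqu : projQuadrance B V W = q) (hqv : projQuadrance B U W = q) (hq : q ≠ 0)
    (hqw : projQuadrance B U V ≠ 0)
    (hSu : projSpread B U V W = S)
    (hSq : 1 - S * q ≠ 0) :
    projQuadrance B U V = 4 * q * (1 - S) * (1 - q) / (1 - S * q) ^ 2 ∧
      projSpread B W U V = 4 * S * (1 - S) * (1 - q) / (1 - S * q) ^ 2 := by
  have hcross := projSpread_cross_law hsym haU haV haW hdUV hdUW
  rw [hqu, hqv, hSu] at hcross
  have hqw_eq : projQuadrance B U V = 4 * q * (1 - S) * (1 - q) / (1 - S * q) ^ 2 :=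
    eq_of_isosceles_cross_law (by linear_combination hcross) hqw hSq
  have hlaw := projSpread_mul_projQuadrance_eq hsym haU haV haW hdUV hdUW hdVW
  rw [hqu, hSu, hqw_eq] at hlaw
  refine ⟨hqw_eq, ?_⟩
  rw [eq_div_of_mul_eq hq hlaw]
  field_simp

theorem isosceles_projective_triangle
    {F : Type*} [Field F] (hchar : (2 : F) ≠ 0)
    {M : Type*} [AddCommGroup M] [Module F M]
    (B : LinearMap.BilinForm F M) (hsym : ∀ x y : M, B x y = B y x)
    (U V W : M) (hU : U ≠ 0) (hV : V ≠ 0) (hW : W ≠ 0)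
    (haU : B U U ≠ 0) (haV : B V V ≠ 0) (haW : B W W ≠ 0)
    (hdUV : B U U * B V V - (B U V) ^ 2 ≠ 0)
    (hdUW : B U U * B W W - (B U W) ^ 2 ≠ 0)
    (hdVW : B V V * B W W - (B V W) ^ 2 ≠ 0)
    (q S : F)
    (hqu : projQuadrance B V W = q) (hqv : projQuadrance B U W = q) (hq : q ≠ 0)
    (hqw : projQuadrance B U V ≠ 0)
    (hSu : projSpread B U V W = S) (hSv : projSpread B V U W = S)
    (hSq : 1 - S * q ≠ 0) :
    projQuadrance B U V = 4 * q * (1 - S) * (1 - q) / (1 - S * q) ^ 2 ∧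
      projSpread B W U V = 4 * S * (1 - S) * (1 - q) / (1 - S * q) ^ 2 :=
  isosceles_projective_triangle_general B hsym U V W haU haV haW hdUV hdUW hdVW q S hqu hqv hq hqw
    hSu hSq
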